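/- Let k be the degree sequence k = (2n−1, 2n−2, ..., n+1, n, n, n−1, ..., 2, 1) on 2n vertices. Then there is exactly one simple graph with this degree sequence, i.e. |G(k)| = 1. -/

import Mathlib

open scoped Classical

open Finset

private lemma card_filter_val_lt {m : ℕ} (t : ℕ) (h : t ≤ m) :
    (Finset.univ.filter (fun j : Fin m => (j : ℕ) < t)).card = t := by
  have he : Finset.univ.filter (fun j : Fin m => (j : ℕ) < t)
      = Finset.univ.map (Fin.castLEEmb h) := by
    ext j
    simp only [mem_filter, mem_univ, true_and, mem_map]
    constructor
    · intro hj
      exact ⟨⟨(j : ℕ), hj⟩, by simp⟩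
    · rintro ⟨a, rfl⟩
      simp
  rw [he, card_map, card_univ, Fintype.card_fin]

private lemma card_T (n : ℕ) (i : Fin (2 * n)) :
    (Finset.univ.filter (fun j : Fin (2 * n) => j ≠ i ∧ (i : ℕ) + (j : ℕ) < 2 * n)).card
      = if (i : ℕ) < n then 2 * n - 1 - (i : ℕ) else 2 * n - (i : ℕ) := by
  have hi := i.isLt
  have h1 : Finset.univ.filter (fun j : Fin (2 * n) => j ≠ i ∧ (i : ℕ) + (j : ℕ) < 2 * n)
      = (Finset.univ.filter (fun j : Fin (2 * n) => (j : ℕ) < 2 * n - (i : ℕ))).erase i := by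
    ext j
    simp only [mem_filter, mem_univ, true_and, mem_erase]
    constructor
    · rintro ⟨h2, h3⟩; exact ⟨h2, by omega⟩
    · rintro ⟨h2, h3⟩; exact ⟨h2, by omega⟩
  rw [h1]
  by_cases hcase : (i : ℕ) < n
  · rw [Finset.card_erase_of_mem (by simp only [mem_filter, mem_univ, true_and]; omega),
      card_filter_val_lt _ (by omega), if_pos hcase]
    omega
  · rw [Finset.erase_eq_of_notMem (by simp only [mem_filter, mem_univ, true_and]; omega),
      card_filter_val_lt _ (by omega), if_neg hcase]

private lemma no_adj_of {n : ℕ} {G : SimpleGraph (Fin (2 * n))}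
    (hG : ∀ i : Fin (2 * n), G.degree i =
        if (i : ℕ) < n then 2 * n - 1 - (i : ℕ) else 2 * n - (i : ℕ))
    (j : Fin (2 * n)) (hj : n ≤ (j : ℕ))
    (hadj : ∀ i' : Fin (2 * n), (i' : ℕ) + (j : ℕ) < 2 * n → G.Adj i' j)
    (i : Fin (2 * n)) (hij : 2 * n ≤ (i : ℕ) + (j : ℕ)) : ¬ G.Adj i j := by
  have hjlt := j.isLt
  have hS : (Finset.univ.filter (fun i' : Fin (2 * n) => (i' : ℕ) + (j : ℕ) < 2 * n))
      ⊆ G.neighborFinset j := by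
    intro i' hi'
    simp only [mem_filter, mem_univ, true_and] at hi'
    rw [SimpleGraph.mem_neighborFinset]
    exact (hadj i' hi').symm
  have hcardS : (Finset.univ.filter
      (fun i' : Fin (2 * n) => (i' : ℕ) + (j : ℕ) < 2 * n)).card = 2 * n - (j : ℕ) := by
    rw [show (Finset.univ.filter (fun i' : Fin (2 * n) => (i' : ℕ) + (j : ℕ) < 2 * n))
        = (Finset.univ.filter (fun i' : Fin (2 * n) => (i' : ℕ) < 2 * n - (j : ℕ))) from
      Finset.filter_congr (fun x _ => by constructor <;> (intro; omega)),
      card_filter_val_lt _ (by omega)]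
  have hdeg : (G.neighborFinset j).card = 2 * n - (j : ℕ) := by
    rw [G.card_neighborFinset_eq_degree, hG j, if_neg (by omega)]
  have heq : (Finset.univ.filter (fun i' : Fin (2 * n) => (i' : ℕ) + (j : ℕ) < 2 * n))
      = G.neighborFinset j :=
    Finset.eq_of_subset_of_card_le hS (by omega)
  intro hAdj
  have hmem : i ∈ G.neighborFinset j := by
    rw [SimpleGraph.mem_neighborFinset]; exact hAdj.symm
  rw [← heq] at hmem
  simp only [mem_filter, mem_univ, true_and] at hmem
  omega

private lemma key {n : ℕ} {G : SimpleGraph (Fin (2 * n))}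
    (hG : ∀ i : Fin (2 * n), G.degree i =
        if (i : ℕ) < n then 2 * n - 1 - (i : ℕ) else 2 * n - (i : ℕ)) :
    ∀ m : ℕ, ∀ i : Fin (2 * n), (i : ℕ) = m → (i : ℕ) < n →
      ∀ j : Fin (2 * n), G.Adj i j ↔ (j ≠ i ∧ (i : ℕ) + (j : ℕ) < 2 * n) := by
  intro m
  induction m using Nat.strong_induction_on with
  | _ m IH =>
    intro i him hin j
    subst him
    have stepA : ∀ j' : Fin (2 * n), 2 * n ≤ (i : ℕ) + (j' : ℕ) → ¬ G.Adj i j' := by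
      intro j' hj'
      have hj'n : n ≤ (j' : ℕ) := by omega
      refine no_adj_of hG j' hj'n ?_ i hj'
      intro i' hi'
      have hi'lt : (i' : ℕ) < (i : ℕ) := by omega
      have hi'n : (i' : ℕ) < n := by omega
      exact (IH (i' : ℕ) hi'lt i' rfl hi'n j').mpr
        ⟨Fin.ne_of_val_ne (by omega), hi'⟩
    have hsub : G.neighborFinset i ⊆
        Finset.univ.filter (fun j' : Fin (2 * n) => j' ≠ i ∧ (i : ℕ) + (j' : ℕ) < 2 * n) := by
      intro j' hj'
      rw [SimpleGraph.mem_neighborFinset] at hj'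
      simp only [mem_filter, mem_univ, true_and]
      refine ⟨hj'.ne', ?_⟩
      by_contra h
      exact stepA j' (by omega) hj'
    have hcard : (Finset.univ.filter
        (fun j' : Fin (2 * n) => j' ≠ i ∧ (i : ℕ) + (j' : ℕ) < 2 * n)).card
        = 2 * n - 1 - (i : ℕ) := by
      rw [card_T n i, if_pos hin]
    have hdeg : (G.neighborFinset i).card = 2 * n - 1 - (i : ℕ) := by
      rw [G.card_neighborFinset_eq_degree, hG i, if_pos hin]
    have heq : G.neighborFinset i
        = Finset.univ.filter (fun j' : Fin (2 * n) => j' ≠ i ∧ (i : ℕ) + (j' : ℕ) < 2 * n) :=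
      Finset.eq_of_subset_of_card_le hsub (by omega)
    rw [← SimpleGraph.mem_neighborFinset, heq, mem_filter]
    simp

private lemma adj_iff {n : ℕ} {G : SimpleGraph (Fin (2 * n))}
    (hG : ∀ i : Fin (2 * n), G.degree i =
        if (i : ℕ) < n then 2 * n - 1 - (i : ℕ) else 2 * n - (i : ℕ)) :
    ∀ i j : Fin (2 * n), G.Adj i j ↔ (i ≠ j ∧ (i : ℕ) + (j : ℕ) < 2 * n) := by
  intro i j
  by_cases hi : (i : ℕ) < n
  · rw [key hG (i : ℕ) i rfl hi j]
    constructor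
    · rintro ⟨h1, h2⟩; exact ⟨h1.symm, h2⟩
    · rintro ⟨h1, h2⟩; exact ⟨h1.symm, h2⟩
  · by_cases hj : (j : ℕ) < n
    · rw [G.adj_comm, key hG (j : ℕ) j rfl hj i]
      constructor
      · rintro ⟨h1, h2⟩; exact ⟨h1, by omega⟩
      · rintro ⟨h1, h2⟩; exact ⟨h1, by omega⟩
    · constructor
      · intro hAdj
        exact absurd hAdj (no_adj_of hG j (le_of_not_gt hj)
          (fun i' hi' => (key hG (i' : ℕ) i' rfl (by omega) j).mpr
            ⟨Fin.ne_of_val_ne (by omega), hi'⟩) i (by omega))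
      · rintro ⟨h1, h2⟩
        omega

private def G0 (n : ℕ) : SimpleGraph (Fin (2 * n)) where
  Adj i j := j ≠ i ∧ (i : ℕ) + (j : ℕ) < 2 * n
  symm := ⟨by rintro i j ⟨h1, h2⟩; exact ⟨h1.symm, by omega⟩⟩
  loopless := ⟨by rintro i ⟨h1, _⟩; exact h1 rfl⟩

private lemma G0_degree (n : ℕ) (i : Fin (2 * n)) :
    (G0 n).degree i = if (i : ℕ) < n then 2 * n - 1 - (i : ℕ) else 2 * n - (i : ℕ) := by
  rw [← SimpleGraph.card_neighborFinset_eq_degree, SimpleGraph.neighborFinset_eq_filter,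
    ← card_T n i]
  congr 1
  ext j
  simp only [mem_filter, mem_univ, true_and]
  exact Iff.rfl

/-- The degree sequence `(2n−1, 2n−2, …, n+1, n, n, n−1, …, 2, 1)` on `2n` vertices
has exactly one realization as a simple labelled graph. -/
theorem unique_realization_threshold_sequence (n : ℕ) :
    Nat.card {G : SimpleGraph (Fin (2 * n)) //
      ∀ i : Fin (2 * n), G.degree i =
        if (i : ℕ) < n then 2 * n - 1 - (i : ℕ) else 2 * n - (i : ℕ)} = 1 := by
  rw [Nat.card_eq_one_iff_unique]
  constructor
  · constructor
    rintro ⟨G, hG⟩ ⟨G', hG'⟩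
    refine Subtype.ext ?_
    ext i j
    rw [adj_iff hG i j, adj_iff hG' i j]
  · exact ⟨⟨G0 n, G0_degree n⟩⟩
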